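/- Let Γ be a finite graph with universal sequence {(u_k, U_k)} as above. Then for each k, the map x ↦ x* (sending (a^m)^g to a^g for a ∈ V(Γ), m ∈ ℤ\{0}, g ∈ A(Γ)) is injective on U_k, and induces a graph isomorphism from CG(U_k) to the induced subgraph of the extension graph Γ^e on the vertex set U_k*. -/

import Mathlib

open scoped commutatorElement

/-- The set of commutator relations of a right-angled Artin group on a graph. -/
def raagRels {α : Type*} (Γ : SimpleGraph α) : Set (FreeGroup α) :=
  {r | ∃ u v : α, Γ.Adj u v ∧ r = ⁅FreeGroup.of u, FreeGroup.of v⁆}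

/-- The right-angled Artin group on the graph `Γ`. -/
def Raag {α : Type*} (Γ : SimpleGraph α) : Type _ := PresentedGroup (raagRels Γ)

instance {α : Type*} (Γ : SimpleGraph α) : Group (Raag Γ) :=
  inferInstanceAs (Group (PresentedGroup (raagRels Γ)))

/-- The standard generator of `Raag Γ` corresponding to a vertex. -/
def Raag.of {α : Type*} (Γ : SimpleGraph α) (v : α) : Raag Γ := PresentedGroup.of v

/-- The commutation graph of a subset `X` of a group `G`. -/
def commGraph (G : Type*) [Group G] (X : Set G) : SimpleGraph X where
  Adj x y := x ≠ y ∧ Commute x.1 y.1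
  symm := ⟨fun _ _ ⟨h1, h2⟩ => ⟨h1.symm, h2.symm⟩⟩
  loopless := ⟨fun _ ⟨h1, _⟩ => h1 rfl⟩

/-- The natural homomorphism `A(CG(X)) → G` extending the identity on `X`. -/
def natHom (G : Type*) [Group G] (X : Set G) : Raag (commGraph G X) →* G :=
  PresentedGroup.toGroup (f := Subtype.val) (by
    rintro r ⟨u, v, hadj, rfl⟩
    rw [map_commutatorElement]
    simp only [FreeGroup.lift_apply_of]
    exact commutatorElement_eq_one_iff_commute.mpr hadj.2)

/-- The star of a vertex: vertices equal or adjacent to `v`. -/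
def starSet {α : Type*} (Γ : SimpleGraph α) (v : α) : Set α := {w | w = v ∨ Γ.Adj v w}

/-- The link of a vertex: vertices adjacent to `v`. -/
def linkSet {α : Type*} (Γ : SimpleGraph α) (v : α) : Set α := {w | Γ.Adj v w}

/-- The double of a graph `X` along the star of a vertex `v`:
two copies of the complement of the star, glued along the star. -/
def doubleStar {α : Type*} (X : SimpleGraph α) (v : α) :
    SimpleGraph ((Fin 2 × {w : α // w ∉ starSet X v}) ⊕ {w : α // w ∈ starSet X v}) where
  Adj a b :=
    match a, b with
    | .inl (i, x), .inl (j, y) => i = j ∧ X.Adj x.1 y.1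
    | .inl (_, x), .inr y => X.Adj x.1 y.1
    | .inr x, .inl (_, y) => X.Adj x.1 y.1
    | .inr x, .inr y => X.Adj x.1 y.1
  symm := by
    constructor
    rintro (⟨i, x⟩ | x) (⟨j, y⟩ | y) h
    · exact ⟨h.1.symm, h.2.symm⟩
    · exact h.symm
    · exact h.symm
    · exact h.symm
  loopless := by
    constructor
    rintro (⟨i, x⟩ | x) h
    · exact X.loopless.irrefl _ h.2
    · exact X.loopless.irrefl _ h

/-- The group element represented by a word (a list of letters with signs). -/
def wprod {α : Type*} (Γ : SimpleGraph α) (l : List (α × Bool)) : Raag Γ :=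
  (l.map fun p => if p.2 then Raag.of Γ p.1 else (Raag.of Γ p.1)⁻¹).prod

/-- The word length of an element of `Raag Γ` with respect to the vertex generators. -/
noncomputable def wordLength {α : Type*} (Γ : SimpleGraph α) (w : Raag Γ) : ℕ :=
  sInf {n | ∃ l : List (α × Bool), l.length = n ∧ wprod Γ l = w}

/-- A word is reduced if its length realizes the word length of the element it represents. -/
def WordReduced {α : Type*} (Γ : SimpleGraph α) (l : List (α × Bool)) : Prop :=
  l.length = wordLength Γ (wprod Γ l)

/-- The right-counting vector of a word: `rcv Γ l i` is the minimal word length of `y`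
such that the suffix of `l` from position `i` equals `x * sᵢ^{eᵢ} * y` with `x` in the
subgroup generated by the link of `sᵢ`. -/
noncomputable def rcv {α : Type*} (Γ : SimpleGraph α) (l : List (α × Bool))
    (i : Fin l.length) : ℕ :=
  sInf {m | ∃ x y : Raag Γ,
    x ∈ Subgroup.closure (Raag.of Γ '' linkSet Γ (l.get i).1) ∧
    wordLength Γ y = m ∧
    wprod Γ (l.drop i) = x * wprod Γ [l.get i] * y}

/-- The exponent used by the inflating map `σ` at position `i` of the word `l`. -/
noncomputable def sigmaExp {α : Type*} (Γ : SimpleGraph α) (M : ℕ) (l : List (α × Bool))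
    (i : Fin l.length) : ℤ :=
  if (l.get i).2 then (4 : ℤ) ^ (M - 1 - rcv Γ l i)
  else -2 * (4 : ℤ) ^ (M - 1 - rcv Γ l i)

/-- The inflating map `σ` applied to a word `l`, as an element of `Raag Γ`. -/
noncomputable def sigmaProd {α : Type*} (Γ : SimpleGraph α) (M : ℕ)
    (l : List (α × Bool)) : Raag Γ :=
  (List.ofFn fun i : Fin l.length => (Raag.of Γ (l.get i).1) ^ (sigmaExp Γ M l i)).prod

section UniversalSequence

variable {n : ℕ} (Γ : SimpleGraph (Fin n))

/-- The hypotheses defining the universal sequence `{(u_k, U_k)}`: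
`u_{2ni+2j} = a_j^{4^i}`, `u_{2ni+2j+1} = a_j^{-2·4^i}`, `U₀ = V`,
`U_{k+1} = (U_k ∪ U_k^{u_k}) △ {u_k, u_k⁻²}`. -/
def IsUniversalSequence (u : ℕ → Raag Γ) (U : ℕ → Set (Raag Γ)) : Prop :=
  (∀ (i : ℕ) (j : Fin n), u (2 * n * i + 2 * (j : ℕ)) = (Raag.of Γ j) ^ ((4 : ℤ) ^ i)) ∧
  (∀ (i : ℕ) (j : Fin n),
      u (2 * n * i + 2 * (j : ℕ) + 1) = (Raag.of Γ j) ^ (-(2 * (4 : ℤ) ^ i))) ∧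
  U 0 = Set.range (Raag.of Γ) ∧
  ∀ k, U (k + 1) =
    symmDiff (U k ∪ (fun x => (u k)⁻¹ * x * u k) '' U k) {u k, (u k) ^ (-2 : ℤ)}

end UniversalSequence

/-!
Every element of `U_k` is a conjugate `(a_j ^ e) ^ w` with `w = u_{s₁} ⋯ u_{sᵣ}` for earlier
indices `s₁ < ⋯ < sᵣ` such that the vertex of `u_{s₁}` lies outside the star of `j`, and with `e`
determined by `j` and `s₁`; conversely every such tag `(j, {s₁, …, sᵣ})` occurs, which gives a
closed form for `U_k`. Now `((a_j ^ e) ^ w)* = a_j ^ w`, and `a_j ^ w` determines `j` (by exponent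
sums) and, for each vertex `b` outside the star of `j`, the indices `s` with vertex `b`: a
homomorphism to the Heisenberg group sending `a_j, a_b` to the standard generators turns `a_j ^ w`
into the exponent sum of `a_b` in `w`, a sum of distinct powers of `-2`. In particular `a_j ^ w`
determines `s₁`, hence `e`, hence the element. Commutation passes between `x` and `x*` because
`x ↦ x*` is well defined on all nonzero powers.
-/

@[ext] structure IntHeisenberg where
  a : ℤ
  b : ℤ
  c : ℤ

namespace IntHeisenberg

instance : Mul IntHeisenberg := ⟨fun x y => ⟨x.a + y.a, x.b + y.b, x.c + y.c + x.a * y.b⟩⟩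
instance : One IntHeisenberg := ⟨⟨0, 0, 0⟩⟩
instance : Inv IntHeisenberg := ⟨fun x => ⟨-x.a, -x.b, x.a * x.b - x.c⟩⟩

@[simp] lemma mul_a (x y : IntHeisenberg) : (x * y).a = x.a + y.a := rfl
@[simp] lemma mul_b (x y : IntHeisenberg) : (x * y).b = x.b + y.b := rfl
@[simp] lemma mul_c (x y : IntHeisenberg) : (x * y).c = x.c + y.c + x.a * y.b := rfl
@[simp] lemma one_a : (1 : IntHeisenberg).a = 0 := rfl
@[simp] lemma one_b : (1 : IntHeisenberg).b = 0 := rfl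
@[simp] lemma one_c : (1 : IntHeisenberg).c = 0 := rfl
@[simp] lemma inv_a (x : IntHeisenberg) : x⁻¹.a = -x.a := rfl
@[simp] lemma inv_b (x : IntHeisenberg) : x⁻¹.b = -x.b := rfl
@[simp] lemma inv_c (x : IntHeisenberg) : x⁻¹.c = x.a * x.b - x.c := rfl

instance : Group IntHeisenberg where
  mul_assoc x y z := by ext <;> simp <;> ring
  one_mul x := by ext <;> simp
  mul_one x := by ext <;> simp
  inv_mul_cancel x := by ext <;> simp

def fstHom : IntHeisenberg →* Multiplicative ℤ where
  toFun x := .ofAdd x.a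
  map_one' := rfl
  map_mul' _ _ := rfl

def sndHom : IntHeisenberg →* Multiplicative ℤ where
  toFun x := .ofAdd x.b
  map_one' := rfl
  map_mul' _ _ := rfl

lemma a_mul_b_eq_of_commute {x y : IntHeisenberg} (h : Commute x y) : x.a * y.b = y.a * x.b := by
  have := congrArg IntHeisenberg.c h.eq
  simp only [mul_c] at this
  linarith

end IntHeisenberg

lemma inv_conj_zpow {G : Type*} [Group G] (g x : G) (e : ℤ) :
    (g⁻¹ * x * g) ^ e = g⁻¹ * x ^ e * g := by
  simpa using conj_zpow (a := g⁻¹) (b := x) (i := e)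

namespace Raag

variable {α : Type*} (Γ : SimpleGraph α)

def lift {G : Type*} [Group G] (f : α → G) (hf : ∀ a b, Γ.Adj a b → Commute (f a) (f b)) :
    Raag Γ →* G :=
  PresentedGroup.toGroup (rels := raagRels Γ) (f := f) (by
    rintro r ⟨a, b, hab, rfl⟩
    rw [map_commutatorElement, FreeGroup.lift_apply_of, FreeGroup.lift_apply_of]
    exact commutatorElement_eq_one_iff_commute.mpr (hf a b hab))

@[simp] lemma lift_of {G : Type*} [Group G] (f : α → G)
    (hf : ∀ a b, Γ.Adj a b → Commute (f a) (f b)) (a : α) :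
    lift Γ f hf (Raag.of Γ a) = f a :=
  PresentedGroup.toGroup.of _

lemma hom_ext {G : Type*} [Group G] {φ ψ : Raag Γ →* G}
    (h : ∀ a, φ (Raag.of Γ a) = ψ (Raag.of Γ a)) : φ = ψ :=
  PresentedGroup.ext h

lemma commute_of_adj {a b : α} (h : Γ.Adj a b) : Commute (Raag.of Γ a) (Raag.of Γ b) := by
  rw [← commutatorElement_eq_one_iff_commute]
  change ⁅PresentedGroup.mk (raagRels Γ) (.of a), PresentedGroup.mk (raagRels Γ) (.of b)⁆ = 1
  rw [← map_commutatorElement]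
  exact (QuotientGroup.eq_one_iff _).mpr (Subgroup.subset_normalClosure ⟨a, b, h, rfl⟩)

section IsStarMap

variable {Γ} {st : Raag Γ → Raag Γ}

def IsStarMap (st : Raag Γ → Raag Γ) : Prop :=
  ∀ (a : α) (m : ℤ) (g : Raag Γ), m ≠ 0 → st (g⁻¹ * Raag.of Γ a ^ m * g) = g⁻¹ * Raag.of Γ a * g

lemma commute_conj_of_commute_conj_zpow (hst : IsStarMap st) {a : α} {m : ℤ} (hm : m ≠ 0)
    {g y : Raag Γ} (h : Commute (g⁻¹ * Raag.of Γ a ^ m * g) y) :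
    Commute (g⁻¹ * Raag.of Γ a * g) y := by
  -- conjugation by `y` fixes `g⁻¹ * a ^ m * g`, so, applying `st`, it also fixes `g⁻¹ * a * g`
  have hfix : (g * y)⁻¹ * Raag.of Γ a ^ m * (g * y) = g⁻¹ * Raag.of Γ a ^ m * g := by
    calc (g * y)⁻¹ * Raag.of Γ a ^ m * (g * y)
        = y⁻¹ * ((g⁻¹ * Raag.of Γ a ^ m * g) * y) := by group
      _ = g⁻¹ * Raag.of Γ a ^ m * g := by rw [h.eq]; group
  have hroot := congrArg st hfix
  rw [hst a m _ hm, hst a m _ hm] at hroot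
  calc g⁻¹ * Raag.of Γ a * g * y = y * ((g * y)⁻¹ * Raag.of Γ a * (g * y)) := by group
    _ = y * (g⁻¹ * Raag.of Γ a * g) := by rw [hroot]

lemma commute_conj_zpow_iff (hst : IsStarMap st) {a b : α} {m l : ℤ} (hm : m ≠ 0) (hl : l ≠ 0)
    {g h : Raag Γ} :
    Commute (g⁻¹ * Raag.of Γ a * g) (h⁻¹ * Raag.of Γ b * h) ↔
      Commute (g⁻¹ * Raag.of Γ a ^ m * g) (h⁻¹ * Raag.of Γ b ^ l * h) := by
  refine ⟨fun hc => ?_, fun hc => ?_⟩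
  · rw [← inv_conj_zpow, ← inv_conj_zpow]
    exact hc.zpow_zpow m l
  · exact (commute_conj_of_commute_conj_zpow hst hl
      (commute_conj_of_commute_conj_zpow hst hm hc).symm).symm

end IsStarMap

variable [DecidableEq α]

def expSum (b : α) : Raag Γ →* Multiplicative ℤ :=
  lift Γ (fun v => .ofAdd (if v = b then 1 else 0)) fun _ _ _ => Commute.all _ _

lemma toAdd_expSum_conj_zpow (b a : α) (g : Raag Γ) (e : ℤ) :
    (expSum Γ b (g⁻¹ * Raag.of Γ a ^ e * g)).toAdd = if a = b then e else 0 := by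
  simp [expSum, mul_comm]

lemma eq_and_eq_of_conj_zpow_eq {a b : α} {e f : ℤ} {g h : Raag Γ} (he : e ≠ 0)
    (H : g⁻¹ * Raag.of Γ a ^ e * g = h⁻¹ * Raag.of Γ b ^ f * h) : a = b ∧ e = f := by
  have key := congrArg (fun x => (expSum Γ a x).toAdd) H
  simp only [toAdd_expSum_conj_zpow, if_true] at key
  by_cases hba : b = a
  · exact ⟨hba.symm, by rwa [if_pos hba] at key⟩
  · exact absurd (by rwa [if_neg hba] at key) he

def toHeisenberg {a b : α} (hb : b ∉ starSet Γ a) : Raag Γ →* IntHeisenberg :=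
  lift Γ (fun v => if v = a then ⟨1, 0, 0⟩ else if v = b then ⟨0, 1, 0⟩ else 1) (by
    intro p q hpq
    have hb' : ¬ (b = a ∨ Γ.Adj a b) := hb
    split_ifs <;> subst_vars <;> first
      | exact Commute.one_left _ | exact Commute.one_right _ | exact Commute.refl _
      | exact absurd hpq (by simp_all [SimpleGraph.adj_comm]))

lemma sndHom_comp_toHeisenberg {a b : α} (hb : b ∉ starSet Γ a) :
    IntHeisenberg.sndHom.comp (toHeisenberg Γ hb) = expSum Γ b := by
  have hab : a ≠ b := fun h => hb (Or.inl h.symm)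
  refine hom_ext Γ fun v => ?_
  simp only [MonoidHom.comp_apply, toHeisenberg, expSum, lift_of]
  split_ifs <;> simp_all [IntHeisenberg.sndHom]

lemma expSum_eq_one_of_commute_zpow {a b : α} (hb : b ∉ starSet Γ a) {e : ℤ} (he : e ≠ 0)
    {y : Raag Γ} (h : Commute y (Raag.of Γ a ^ e)) : expSum Γ b y = 1 := by
  set φ := toHeisenberg Γ hb
  have hφa : (φ (Raag.of Γ a ^ e)).a = e := by
    change (IntHeisenberg.fstHom (φ (Raag.of Γ a ^ e))).toAdd = e
    rw [map_zpow, map_zpow]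
    simp [φ, toHeisenberg, IntHeisenberg.fstHom]
  have hφb : (φ (Raag.of Γ a ^ e)).b = 0 := by
    change (IntHeisenberg.sndHom (φ (Raag.of Γ a ^ e))).toAdd = 0
    rw [map_zpow, map_zpow]
    simp [φ, toHeisenberg, IntHeisenberg.sndHom]
  have key := IntHeisenberg.a_mul_b_eq_of_commute (h.map φ)
  rw [hφa, hφb, mul_zero] at key
  have hy : (φ y).b = 0 := (mul_eq_zero.mp key.symm).resolve_left he
  rw [← sndHom_comp_toHeisenberg Γ hb, MonoidHom.comp_apply]
  exact congrArg Multiplicative.ofAdd hy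

lemma expSum_eq_of_conj_zpow_eq {a b : α} (hb : b ∉ starSet Γ a) {e : ℤ} (he : e ≠ 0)
    {g h : Raag Γ} (H : g⁻¹ * Raag.of Γ a ^ e * g = h⁻¹ * Raag.of Γ a ^ e * h) :
    expSum Γ b g = expSum Γ b h := by
  have hc : Commute (h * g⁻¹) (Raag.of Γ a ^ e) := by
    calc h * g⁻¹ * Raag.of Γ a ^ e
        = h * (g⁻¹ * Raag.of Γ a ^ e * g) * g⁻¹ := by group
      _ = Raag.of Γ a ^ e * (h * g⁻¹) := by rw [H]; group
  have := expSum_eq_one_of_commute_zpow Γ hb he hc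
  rw [map_mul, map_inv, mul_inv_eq_one] at this
  exact this.symm

end Raag

/-- Split into even and odd exponents and compare two base `2` expansions. -/
lemma Finset.sum_neg_two_pow_injective :
    Function.Injective fun A : Finset ℕ => ∑ r ∈ A, (-2 : ℤ) ^ r := by
  intro A B h
  have split : ∀ s : Finset ℕ, ∑ r ∈ s, (-2 : ℤ) ^ r =
      ((∑ r ∈ s.filter Even, 2 ^ r : ℕ) : ℤ) - ((∑ r ∈ s.filter (¬Even ·), 2 ^ r : ℕ) : ℤ) := by
    intro s
    rw [← Finset.sum_filter_add_sum_filter_not s Even]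
    push_cast
    rw [sub_eq_add_neg, ← Finset.sum_neg_distrib]
    congr 1 <;> refine Finset.sum_congr rfl fun r hr => ?_
    · rw [(Finset.mem_filter.mp hr).2.neg_pow]
    · rw [(Nat.not_even_iff_odd.mp (Finset.mem_filter.mp hr).2).neg_pow]
  have hdisj : ∀ s t : Finset ℕ, Disjoint (s.filter Even) (t.filter (¬Even ·)) :=
    fun s t => Finset.disjoint_filter_filter_not s t Even
  have hsum : ∑ r ∈ A.filter Even ∪ B.filter (¬Even ·), 2 ^ r =
      ∑ r ∈ B.filter Even ∪ A.filter (¬Even ·), 2 ^ r := by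
    rw [Finset.sum_union (hdisj A B), Finset.sum_union (hdisj B A)]
    have h' : ∑ r ∈ A, (-2 : ℤ) ^ r = ∑ r ∈ B, (-2 : ℤ) ^ r := h
    rw [split, split] at h'
    omega
  have hU := Finset.geomSum_injective le_rfl hsum
  have heven := congrArg (Finset.filter Even) hU
  have hodd := congrArg (Finset.filter (¬Even ·)) hU
  simp only [Finset.filter_union, Finset.filter_filter, and_self, and_not_self,
    Finset.filter_false, Finset.union_empty, not_and_self, Finset.empty_union] at heven hodd
  rw [← Finset.filter_union_filter_not_eq Even A, ← Finset.filter_union_filter_not_eq Even B,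
    heven, hodd]

lemma Nat.count_comp_div_two (p : ℕ → Prop) [DecidablePred p] (m : ℕ) :
    Nat.count (fun t => p (t / 2)) (2 * m) = 2 * Nat.count p m := by
  induction m with
  | zero => simp
  | succ m ih =>
    rw [show 2 * (m + 1) = 2 * m + 1 + 1 by ring, Nat.count_succ, Nat.count_succ, ih,
      Nat.count_succ, show (2 * m + 1) / 2 = m by omega, show 2 * m / 2 = m by omega]
    split_ifs <;> ring

lemma Set.symmDiff_insert_pair {β : Type*} {X : Set β} {a b : β} (ha : a ∉ X) (hb : b ∉ X)
    (hab : a ≠ b) : symmDiff (insert a X) {a, b} = insert b X := by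
  ext x
  simp only [Set.mem_symmDiff, Set.mem_insert_iff, Set.mem_singleton_iff]
  grind

noncomputable def commGraphIsoImage {G H : Type*} [Group G] [Group H] (f : G → H) (s : Set G)
    (hf : s.InjOn f) (hc : ∀ x ∈ s, ∀ y ∈ s, Commute (f x) (f y) ↔ Commute x y) :
    commGraph G s ≃g commGraph H (f '' s) where
  toEquiv := Equiv.Set.imageOfInjOn f s hf
  map_rel_iff' {x y} := by
    change (_ ∧ Commute (f x) (f y)) ↔ (_ ∧ Commute x.1 y.1)
    rw [hc x x.2 y y.2, (Equiv.Set.imageOfInjOn f s hf).injective.ne_iff]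

namespace UnivSeq

variable {α : Type*} (Γ : SimpleGraph α) (c : ℕ → α)

/-- The least element of `S`, or `k` if `S = ∅` (tags at time `k` only use indices `< k`). -/
def tagStart (k : ℕ) (S : Finset ℕ) : ℕ := (insert k S).min' (Finset.insert_nonempty k S)

def IsAdmissible (k : ℕ) (τ : α × Finset ℕ) : Prop :=
  (∀ t ∈ τ.2, t < k) ∧ ∀ h : τ.2.Nonempty, c (τ.2.min' h) ∉ starSet Γ τ.1

section tagStart

variable {k : ℕ} {S : Finset ℕ}

@[simp] lemma tagStart_empty (k : ℕ) : tagStart k ∅ = k := by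
  simp [tagStart]

lemma tagStart_le_self : tagStart k S ≤ k :=
  Finset.min'_le _ _ (Finset.mem_insert_self k S)

lemma tagStart_le {t : ℕ} (ht : t ∈ S) : tagStart k S ≤ t :=
  Finset.min'_le _ _ (Finset.mem_insert_of_mem ht)

lemma tagStart_of_nonempty (h : S.Nonempty) (hS : ∀ t ∈ S, t < k) :
    tagStart k S = S.min' h := by
  rw [tagStart, Finset.min'_insert k S h]
  exact min_eq_right (hS _ (S.min'_mem h)).le

lemma tagStart_succ_insert : tagStart (k + 1) (insert k S) = tagStart k S := by
  rw [tagStart, Finset.min'_insert (k + 1) (insert k S) (Finset.insert_nonempty k S)]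
  exact min_eq_right (tagStart_le_self.trans (Nat.le_succ k))

lemma eq_empty_of_tagStart_eq (hS : ∀ t ∈ S, t < k) (h : tagStart k S = k) : S = ∅ := by
  refine Finset.eq_empty_of_forall_notMem fun t ht => ?_
  have := tagStart_le (k := k) ht
  have := hS t ht
  omega

end tagStart

section IsAdmissible

variable {Γ c} {k : ℕ}

lemma isAdmissible_empty (k : ℕ) (j : α) : IsAdmissible Γ c k (j, ∅) :=
  ⟨by simp, fun h => absurd h Finset.not_nonempty_empty⟩

lemma IsAdmissible.succ {τ : α × Finset ℕ} (h : IsAdmissible Γ c k τ) :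
    IsAdmissible Γ c (k + 1) τ :=
  ⟨fun t ht => (h.1 t ht).trans (Nat.lt_succ_self k), h.2⟩

lemma IsAdmissible.of_succ {τ : α × Finset ℕ} (h : IsAdmissible Γ c (k + 1) τ) (hk : k ∉ τ.2) :
    IsAdmissible Γ c k τ :=
  ⟨fun t ht => lt_of_le_of_ne (Nat.lt_succ_iff.mp (h.1 t ht)) fun htk => hk (htk ▸ ht), h.2⟩

lemma isAdmissible_succ_insert_iff {j : α} {S : Finset ℕ} (hk : k ∉ S) :
    IsAdmissible Γ c (k + 1) (j, insert k S) ↔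
      IsAdmissible Γ c k (j, S) ∧ (S.Nonempty ∨ c k ∉ starSet Γ j) := by
  have hbound : (∀ t ∈ insert k S, t < k + 1) ↔ ∀ t ∈ S, t < k := by
    simp only [Finset.mem_insert, forall_eq_or_imp, Nat.lt_succ_self, true_and]
    exact forall₂_congr fun t ht => ⟨fun h => lt_of_le_of_ne (Nat.lt_succ_iff.mp h)
      fun htk => hk (htk ▸ ht), fun h => h.trans (Nat.lt_succ_self k)⟩
  simp only [IsAdmissible, hbound]
  rcases S.eq_empty_or_nonempty with rfl | hS
  · simp
  · simp only [hS, true_or, and_true]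
    refine and_congr_right fun hSk => ?_
    have hmin : (insert k S).min' (Finset.insert_nonempty k S) = S.min' hS :=
      tagStart_of_nonempty hS hSk
    simp [hmin]

end IsAdmissible

variable [DecidableEq α]

/-- The exponent carried by the vertex `j` after the first `k` steps: it is multiplied by `-2`
at each step `t < k` with `c t = j`. -/
def vertexExp (k : ℕ) (j : α) : ℤ := (-2) ^ Nat.count (fun t => c t = j) k

def univSeq (k : ℕ) : Raag Γ := Raag.of Γ (c k) ^ vertexExp c k (c k)

/-- The ordered product `u s₁ * ⋯ * u sᵣ`, where `s₁ < ⋯ < sᵣ` are the elements of `S`. -/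
def wordProd (S : Finset ℕ) : Raag Γ := (((S.sort (· ≥ ·)).map (univSeq Γ c)).reverse).prod

/-- A tag `(j, S)` at time `k` stands for the conjugate `(a_j ^ e) ^ wordProd S`, where `e` is the
exponent of `j` at time `tagStart k S`, i.e. when the first conjugation took place. -/
def tagElt (k : ℕ) (τ : α × Finset ℕ) : Raag Γ :=
  (wordProd Γ c τ.2)⁻¹ * Raag.of Γ τ.1 ^ vertexExp c (tagStart k τ.2) τ.1 * wordProd Γ c τ.2

def univSet (k : ℕ) : Set (Raag Γ) := tagElt Γ c k '' {τ | IsAdmissible Γ c k τ}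

section vertexExp

variable {c}

lemma vertexExp_ne_zero (k : ℕ) (j : α) : vertexExp c k j ≠ 0 :=
  pow_ne_zero _ (by norm_num)

@[simp] lemma vertexExp_zero (j : α) : vertexExp c 0 j = 1 := by
  simp [vertexExp]

lemma vertexExp_succ_of_ne {k : ℕ} {j : α} (h : c k ≠ j) :
    vertexExp c (k + 1) j = vertexExp c k j := by
  simp [vertexExp, Nat.count_succ, h]

lemma vertexExp_succ_self (k : ℕ) : vertexExp c (k + 1) (c k) = -2 * vertexExp c k (c k) := by
  simp [vertexExp, Nat.count_succ, pow_succ, mul_comm]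

end vertexExp

section wordProd

variable {c}

@[simp] lemma wordProd_empty : wordProd Γ c ∅ = 1 := by
  simp [wordProd]

lemma wordProd_insert_of_lt {k : ℕ} {S : Finset ℕ} (hS : ∀ t ∈ S, t < k) :
    wordProd Γ c (insert k S) = wordProd Γ c S * univSeq Γ c k := by
  rw [wordProd, Finset.sort_insert _ (fun t ht => (hS t ht).le) fun hk => (hS k hk).false]
  simp [wordProd]

lemma toAdd_expSum_wordProd (b : α) (S : Finset ℕ) :
    (Raag.expSum Γ b (wordProd Γ c S)).toAdd =
      ∑ t ∈ S with c t = b, (-2 : ℤ) ^ Nat.count (fun t => c t = b) t := by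
  induction S using Finset.induction_on_max with
  | empty => simp
  | insert a S ha ih =>
    have haS : a ∉ S := fun h => (ha a h).false
    rw [wordProd_insert_of_lt Γ ha, map_mul, toAdd_mul, ih, Finset.filter_insert]
    by_cases hab : c a = b
    · rw [if_pos hab, Finset.sum_insert (fun h => haS (Finset.mem_filter.mp h).1)]
      simp [univSeq, Raag.expSum, hab, vertexExp, add_comm]
    · simp [univSeq, Raag.expSum, hab]

lemma filter_eq_of_expSum_wordProd_eq {b : α} {S S' : Finset ℕ}
    (H : Raag.expSum Γ b (wordProd Γ c S) = Raag.expSum Γ b (wordProd Γ c S')) :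
    S.filter (c · = b) = S'.filter (c · = b) := by
  set N := Nat.count (fun t => c t = b)
  have hinj : Set.InjOn N ↑((S ∪ S').filter (c · = b)) := fun s hs t ht hst =>
    StrictMonoOn.injOn (s := {t | c t = b}) (fun _ hs _ _ hst => Nat.count_strict_mono hs hst)
      (Finset.mem_filter.mp hs).2 (Finset.mem_filter.mp ht).2 hst
  have hsub : ∀ T ⊆ S ∪ S', T.filter (c · = b) ⊆ (S ∪ S').filter (c · = b) :=
    fun T hT => Finset.filter_subset_filter _ hT
  have hsum := congrArg Multiplicative.toAdd H
  rw [toAdd_expSum_wordProd, toAdd_expSum_wordProd,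
    ← Finset.sum_image (hinj.mono (hsub S Finset.subset_union_left)),
    ← Finset.sum_image (hinj.mono (hsub S' Finset.subset_union_right))] at hsum
  exact (Finset.image_eq_image_iff_of_injOn hinj (hsub S Finset.subset_union_left)
    (hsub S' Finset.subset_union_right)).mp (Finset.sum_neg_two_pow_injective hsum)

end wordProd

section conj

variable {Γ c} {k : ℕ}

lemma tagStart_le_of_conj_zpow_eq {j : α} {S S' : Finset ℕ} (hτ : IsAdmissible Γ c k (j, S))
    {e : ℤ} (he : e ≠ 0)
    (H : (wordProd Γ c S)⁻¹ * Raag.of Γ j ^ e * wordProd Γ c S =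
      (wordProd Γ c S')⁻¹ * Raag.of Γ j ^ e * wordProd Γ c S') :
    tagStart k S' ≤ tagStart k S := by
  rcases S.eq_empty_or_nonempty with rfl | hS
  · rw [tagStart_empty]
    exact tagStart_le_self
  · set t₀ := S.min' hS
    have hfilter := filter_eq_of_expSum_wordProd_eq Γ
      (Raag.expSum_eq_of_conj_zpow_eq Γ (hτ.2 hS) he H)
    have ht₀ : t₀ ∈ S'.filter (c · = c t₀) :=
      hfilter ▸ Finset.mem_filter.mpr ⟨S.min'_mem hS, rfl⟩
    rw [tagStart_of_nonempty hS hτ.1]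
    exact tagStart_le (Finset.mem_filter.mp ht₀).1

lemma eq_and_tagStart_eq_of_conj_zpow_eq {τ τ' : α × Finset ℕ} (hτ : IsAdmissible Γ c k τ)
    (hτ' : IsAdmissible Γ c k τ') {e e' : ℤ} (he : e ≠ 0)
    (H : (wordProd Γ c τ.2)⁻¹ * Raag.of Γ τ.1 ^ e * wordProd Γ c τ.2 =
      (wordProd Γ c τ'.2)⁻¹ * Raag.of Γ τ'.1 ^ e' * wordProd Γ c τ'.2) :
    τ.1 = τ'.1 ∧ tagStart k τ.2 = tagStart k τ'.2 := by
  obtain ⟨hj, rfl⟩ := Raag.eq_and_eq_of_conj_zpow_eq Γ he H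
  obtain ⟨j, S⟩ := τ
  obtain ⟨j', S'⟩ := τ'
  obtain rfl : j = j' := hj
  exact ⟨rfl, le_antisymm (tagStart_le_of_conj_zpow_eq hτ' he H.symm)
    (tagStart_le_of_conj_zpow_eq hτ he H)⟩

lemma eq_of_tagElt_eq_zpow {τ : α × Finset ℕ} (hτ : IsAdmissible Γ c k τ) {a : α} {m : ℤ}
    (H : tagElt Γ c k τ = Raag.of Γ a ^ m) : τ = (a, ∅) := by
  obtain ⟨hj, hstart⟩ := eq_and_tagStart_eq_of_conj_zpow_eq hτ (isAdmissible_empty k a)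
    (vertexExp_ne_zero _ _) (e' := m)
    (by rw [wordProd_empty, inv_one, one_mul, mul_one]; exact H)
  rw [tagStart_empty] at hstart
  exact Prod.ext hj (eq_empty_of_tagStart_eq hτ.1 hstart)

end conj

section step

variable {Γ c} {k : ℕ}

local notation "u" => univSeq Γ c

lemma tagElt_succ {τ : α × Finset ℕ} (hτ : IsAdmissible Γ c k τ) (hne : τ ≠ (c k, ∅)) :
    tagElt Γ c (k + 1) τ = tagElt Γ c k τ := by
  obtain ⟨j, S⟩ := τ
  suffices vertexExp c (tagStart (k + 1) S) j = vertexExp c (tagStart k S) j by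
    simp only [tagElt, this]
  rcases S.eq_empty_or_nonempty with rfl | hS
  · rw [tagStart_empty, tagStart_empty, vertexExp_succ_of_ne]
    rintro rfl
    exact hne rfl
  · rw [tagStart_of_nonempty hS hτ.1, tagStart_of_nonempty hS hτ.succ.1]

lemma tagElt_self (k : ℕ) : tagElt Γ c k (c k, ∅) = u k := by
  simp [tagElt, univSeq]

lemma tagElt_succ_self (k : ℕ) : tagElt Γ c (k + 1) (c k, ∅) = u k ^ (-2 : ℤ) := by
  rw [univSeq, ← zpow_mul, mul_comm]
  simp [tagElt, vertexExp_succ_self]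

lemma conj_tagElt {j : α} {S : Finset ℕ} (hS : ∀ t ∈ S, t < k) :
    (u k)⁻¹ * tagElt Γ c k (j, S) * u k = tagElt Γ c (k + 1) (j, insert k S) := by
  simp only [tagElt, tagStart_succ_insert, wordProd_insert_of_lt Γ hS]
  group

lemma conj_tagElt_empty {j : α} (h : c k ∈ starSet Γ j) :
    (u k)⁻¹ * tagElt Γ c k (j, ∅) * u k = tagElt Γ c k (j, ∅) := by
  have hc : Commute (Raag.of Γ (c k)) (Raag.of Γ j) := by
    rcases h with h | h
    · rw [h]
    · exact (Raag.commute_of_adj Γ h).symm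
  simp only [tagElt, wordProd_empty, inv_one, one_mul, mul_one, univSeq]
  rw [mul_assoc, ← (hc.zpow_zpow _ _).eq, inv_mul_cancel_left]

lemma univSet_zero : univSet Γ c 0 = Set.range (Raag.of Γ) := by
  ext x
  constructor
  · rintro ⟨⟨j, S⟩, hτ, rfl⟩
    obtain rfl : S = ∅ := Finset.eq_empty_of_forall_notMem fun t ht => Nat.not_lt_zero t (hτ.1 t ht)
    exact ⟨j, by simp [tagElt]⟩
  · rintro ⟨j, rfl⟩
    exact ⟨(j, ∅), isAdmissible_empty 0 j, by simp [tagElt]⟩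

lemma univSet_union_conj (k : ℕ) :
    univSet Γ c k ∪ (fun x => (u k)⁻¹ * x * u k) '' univSet Γ c k =
      insert (u k) (tagElt Γ c (k + 1) '' ({τ | IsAdmissible Γ c (k + 1) τ} \ {(c k, ∅)})) := by
  have hold : ∀ τ, IsAdmissible Γ c k τ → tagElt Γ c k τ ∈
      insert (u k) (tagElt Γ c (k + 1) '' ({τ | IsAdmissible Γ c (k + 1) τ} \ {(c k, ∅)})) := by
    intro τ hτ
    by_cases hp : τ = (c k, ∅)
    · exact Or.inl (hp ▸ tagElt_self k)
    · exact Or.inr ⟨τ, ⟨hτ.succ, hp⟩, tagElt_succ hτ hp⟩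
  apply Set.Subset.antisymm
  · rintro x (⟨τ, hτ, rfl⟩ | ⟨_, ⟨⟨j, S⟩, hτ, rfl⟩, rfl⟩)
    · exact hold τ hτ
    by_cases hcond : S.Nonempty ∨ c k ∉ starSet Γ j
    · have hk : k ∉ S := fun hk => (hτ.1 k hk).false
      refine Or.inr ⟨(j, insert k S), ⟨(isAdmissible_succ_insert_iff hk).mpr ⟨hτ, hcond⟩, ?_⟩,
        (conj_tagElt hτ.1).symm⟩
      simp
    · obtain ⟨hS, hc⟩ := not_or.mp hcond
      obtain rfl := Finset.not_nonempty_iff_eq_empty.mp hS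
      simp only
      rw [conj_tagElt_empty (not_not.mp hc)]
      exact hold _ hτ
  · rintro x (rfl | ⟨⟨j, S⟩, ⟨hτ, hne⟩, rfl⟩)
    · exact Or.inl ⟨(c k, ∅), isAdmissible_empty k _, tagElt_self k⟩
    by_cases hk : k ∈ S
    · have hins := (isAdmissible_succ_insert_iff (Γ := Γ) (j := j) (S := S.erase k)
        (Finset.notMem_erase k S)).mp (by rwa [Finset.insert_erase hk])
      refine Or.inr ⟨_, ⟨_, hins.1, rfl⟩, ?_⟩
      simp only
      rw [conj_tagElt hins.1.1, Finset.insert_erase hk]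
    · exact Or.inl ⟨(j, S), hτ.of_succ hk, (tagElt_succ (hτ.of_succ hk) hne).symm⟩

lemma univSet_succ_eq_insert (k : ℕ) :
    univSet Γ c (k + 1) = insert (u k ^ (-2 : ℤ))
      (tagElt Γ c (k + 1) '' ({τ | IsAdmissible Γ c (k + 1) τ} \ {(c k, ∅)})) := by
  rw [univSet, ← tagElt_succ_self, ← Set.image_insert_eq, Set.insert_sdiff_singleton,
    Set.insert_eq_of_mem (s := {τ | IsAdmissible Γ c (k + 1) τ}) (isAdmissible_empty (k + 1) (c k))]

lemma univSet_succ (k : ℕ) :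
    symmDiff (univSet Γ c k ∪ (fun x => (u k)⁻¹ * x * u k) '' univSet Γ c k)
      {u k, u k ^ (-2 : ℤ)} = univSet Γ c (k + 1) := by
  have hnot : ∀ m : ℤ, Raag.of Γ (c k) ^ m ∉
      tagElt Γ c (k + 1) '' ({τ | IsAdmissible Γ c (k + 1) τ} \ {(c k, ∅)}) :=
    fun m ⟨τ, ⟨hτ, hne⟩, H⟩ => hne (eq_of_tagElt_eq_zpow hτ H)
  have hne : u k ≠ u k ^ (-2 : ℤ) := by
    intro H
    have := congrArg (fun x => (Raag.expSum Γ (c k) x).toAdd) H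
    simp only [univSeq, ← zpow_mul, map_zpow, toAdd_zpow, Raag.expSum, Raag.lift_of, if_true,
      toAdd_ofAdd, smul_eq_mul, mul_one] at this
    exact vertexExp_ne_zero k (c k) (by linarith)
  rw [univSet_union_conj, univSet_succ_eq_insert]
  refine Set.symmDiff_insert_pair (hnot _) ?_ hne
  rw [univSeq, ← zpow_mul]
  exact hnot _

end step

section star

variable {Γ c} {st : Raag Γ → Raag Γ}

lemma injOn_univSet (hst : Raag.IsStarMap st) (k : ℕ) :
    Set.InjOn st (univSet Γ c k) := by
  rintro _ ⟨τ, hτ, rfl⟩ _ ⟨τ', hτ', rfl⟩ H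
  simp only [tagElt, hst _ _ _ (vertexExp_ne_zero _ _)] at H
  obtain ⟨hj, hstart⟩ := eq_and_tagStart_eq_of_conj_zpow_eq hτ hτ' one_ne_zero (e' := 1)
    (by simpa only [zpow_one] using H)
  rw [tagElt, tagElt, ← inv_conj_zpow, ← inv_conj_zpow, H, hj, hstart]

lemma commute_iff_commute_of_mem_univSet (hst : Raag.IsStarMap st) {k : ℕ} :
    ∀ x ∈ univSet Γ c k, ∀ y ∈ univSet Γ c k, Commute (st x) (st y) ↔ Commute x y := by
  rintro _ ⟨τ, -, rfl⟩ _ ⟨τ', -, rfl⟩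
  rw [tagElt, tagElt, hst _ _ _ (vertexExp_ne_zero _ _), hst _ _ _ (vertexExp_ne_zero _ _)]
  exact Raag.commute_conj_zpow_iff hst (vertexExp_ne_zero _ _) (vertexExp_ne_zero _ _)

end star

end UnivSeq

lemma Nat.count_div_two_mod_eq {n : ℕ} (hn : 0 < n) (m δ : ℕ) (hδ : δ < 2) :
    Nat.count (fun t => t / 2 % n = m % n) (2 * m + δ) = 2 * (m / n) + δ := by
  have hm : Nat.count (fun s => s % n = m % n) m = m / n := by
    have h := Nat.count_modEq_card m hn m
    simp only [lt_self_iff_false, if_false, add_zero] at h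
    exact h
  interval_cases δ
  · rw [add_zero, add_zero, Nat.count_comp_div_two (fun s => s % n = m % n), hm]
  · rw [Nat.count_succ, Nat.count_comp_div_two (fun s => s % n = m % n), hm,
      if_pos (by rw [Nat.mul_div_cancel_left m two_pos])]

/-- The exponents `4 ^ i` and `-2 * 4 ^ i` are `(-2) ^ p`, where `p` counts the earlier indices
with the same vertex. -/
lemma IsUniversalSequence.eq_univSeq {n : ℕ} (hn : 0 < n) {Γ : SimpleGraph (Fin n)}
    {u : ℕ → Raag Γ} {U : ℕ → Set (Raag Γ)} (h : IsUniversalSequence Γ u U) :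
    u = UnivSeq.univSeq Γ (fun k => ⟨k / 2 % n, Nat.mod_lt _ hn⟩) := by
  funext k
  have hcount := Nat.count_div_two_mod_eq hn (k / 2) (k % 2) (Nat.mod_lt k two_pos)
  rw [Nat.div_add_mod] at hcount
  have hidx : 2 * n * (k / 2 / n) + 2 * (k / 2 % n) = 2 * (k / 2) := by
    rw [mul_assoc, ← mul_add, Nat.div_add_mod]
  simp only [UnivSeq.univSeq, UnivSeq.vertexExp, Fin.mk.injEq, hcount]
  rcases Nat.mod_two_eq_zero_or_one k with hk | hk
  · have hu := h.1 (k / 2 / n) ⟨k / 2 % n, Nat.mod_lt _ hn⟩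
    rw [show 2 * n * (k / 2 / n) + 2 * (k / 2 % n) = k by omega] at hu
    rw [hu, hk, add_zero, pow_mul]
    norm_num
  · have hu := h.2.1 (k / 2 / n) ⟨k / 2 % n, Nat.mod_lt _ hn⟩
    rw [show 2 * n * (k / 2 / n) + 2 * (k / 2 % n) + 1 = k by omega] at hu
    rw [hu, hk, pow_succ, pow_mul]
    congr 1
    ring

/-- the map `x ↦ x*` (sending `(a^m)^g` to `a^g`) is injective on each `U_k`
and induces a graph isomorphism from `CG(U_k)` onto the induced subgraph of the extension
graph `Γ^e` on `U_k*` (the latter being the commutation graph of `U_k*`). -/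
theorem useq_star_injOn_iso {n : ℕ} (hn : 0 < n) (Γ : SimpleGraph (Fin n))
    (u : ℕ → Raag Γ) (U : ℕ → Set (Raag Γ))
    (huU : IsUniversalSequence Γ u U)
    (st : Raag Γ → Raag Γ)
    (hst : ∀ (a : Fin n) (m : ℤ) (g : Raag Γ), m ≠ 0 →
      st (g⁻¹ * (Raag.of Γ a) ^ m * g) = g⁻¹ * Raag.of Γ a * g) :
    ∀ k, Set.InjOn st (U k) ∧
      ∃ φ : commGraph (Raag Γ) (U k) ≃g commGraph (Raag Γ) (st '' U k),
        ∀ x : U k, (φ x : Raag Γ) = st x := by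
  have hU : ∀ k, U k = UnivSeq.univSet Γ (fun k => ⟨k / 2 % n, Nat.mod_lt _ hn⟩) k := by
    intro k
    induction k with
    | zero => rw [huU.2.2.1, UnivSeq.univSet_zero]
    | succ k ih => rw [huU.2.2.2, ih, huU.eq_univSeq hn, UnivSeq.univSet_succ]
  intro k
  rw [hU k]
  exact ⟨UnivSeq.injOn_univSet hst k, commGraphIsoImage st _ (UnivSeq.injOn_univSet hst k)
    (UnivSeq.commute_iff_commute_of_mem_univSet hst), fun _ => rfl⟩
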